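/- arXiv:2210.16016 — 2 statements merged into one kernel-verified Lean document; each statement's English description precedes it below -/
import Mathlib

section
/- Eckart–Young theorem (Frobenius norm): for any m×n real matrix A with singular values σ₁ ≥ σ₂ ≥ … ≥ σₙ ≥ 0 and any m×n real matrix B of rank at most k, one has ‖A - B‖_F² ≥ ∑_{j=k+1}^{n} σⱼ(A)². -/
/-! Let `P` be the orthogonal projection onto the row space of `B`, so that `B (1 - P) = 0` and
`tr P = rank B ≤ k`. Multiplying on the right by the projection `1 - P` does not increase the
Frobenius norm, hence `‖A - B‖² ≥ ‖A (1 - P)‖² = ∑ⱼ σⱼ² qⱼ`, where the `qⱼ ∈ [0, 1]` are the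
diagonal entries of the projection `Q = Vᵀ (1 - P) V`, of trace at least `n - k`. Weights in
`[0, 1]` of total mass at least `n - k` make `∑ⱼ σⱼ² qⱼ` smallest when they sit on the `n - k`
smallest `σⱼ²`. -/

open Matrix

/-- The squared Frobenius norm of a real matrix. -/
def frobSq {m n : ℕ} (A : Matrix (Fin m) (Fin n) ℝ) : ℝ :=
  ∑ i, ∑ j, (A i j) ^ 2

open Finset

theorem IsStarProjection.star_mul_mul {R : Type*} [Monoid R] [StarMul R] {p v : R}
    (hp : IsStarProjection p) (hv : v * star v = 1) : IsStarProjection (star v * p * v) where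
  isIdempotentElem := by
    rw [IsIdempotentElem]
    simp only [mul_assoc]
    rw [← mul_assoc v, hv, one_mul, ← mul_assoc p, hp.isIdempotentElem.eq]
  isSelfAdjoint := by
    rw [IsSelfAdjoint, star_mul, star_mul, star_star, hp.isSelfAdjoint.star_eq, mul_assoc]

section StarProjectionMatrix

variable {n : Type*} [Fintype n] {R : Matrix n n ℝ}

theorem IsStarProjection.transpose_eq (hR : IsStarProjection R) : Rᵀ = R := by
  simpa [star_eq_conjTranspose] using hR.isSelfAdjoint.star_eq

theorem IsStarProjection.diag_mem_Icc (hR : IsStarProjection R) (j : n) :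
    R j j ∈ Set.Icc 0 1 := by
  have hsq : R j j = ∑ i, R i j ^ 2 := by
    conv_lhs => rw [← hR.isIdempotentElem.eq]
    simp only [mul_apply, sq]
    refine sum_congr rfl fun i _ ↦ ?_
    rw [← transpose_apply R i j, hR.transpose_eq]
  have h0 : 0 ≤ R j j := hsq ▸ sum_nonneg fun i _ ↦ sq_nonneg (R i j)
  have hle : R j j ^ 2 ≤ R j j := hsq ▸ single_le_sum (fun i _ ↦ sq_nonneg (R i j)) (mem_univ j)
  exact ⟨h0, by nlinarith⟩

end StarProjectionMatrix

theorem trace_toEuclideanCLM_symm_starProjection {n : Type*} [Fintype n] [DecidableEq n]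
    (K : Submodule ℝ (EuclideanSpace ℝ n)) :
    ((toEuclideanCLM (𝕜 := ℝ) (n := n)).symm K.starProjection).trace = Module.finrank ℝ K := by
  rw [← Matrix.trace_toLin_eq _ (EuclideanSpace.basisFun n ℝ).toBasis,
    ← toEuclideanLin_eq_toLin_orthonormal, ← coe_toEuclideanCLM_eq_toEuclideanLin,
    StarAlgEquiv.apply_symm_apply]
  exact LinearMap.IsProj.trace
    ⟨K.starProjection_apply_mem, fun _ ↦ K.starProjection_eq_self_iff.mpr⟩

theorem exists_isStarProjection_mul_eq_self_trace_eq_rank {ι κ : Type*} [Finite ι] [Fintype κ]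
    (B : Matrix ι κ ℝ) : ∃ P : Matrix κ κ ℝ, IsStarProjection P ∧ P.trace = B.rank ∧ B * P = B := by
  classical
  let K : Submodule ℝ (EuclideanSpace ℝ κ) :=
    (Submodule.span ℝ (Set.range B.row)).map (WithLp.linearEquiv 2 ℝ (κ → ℝ)).symm.toLinearMap
  set P := (toEuclideanCLM (𝕜 := ℝ) (n := κ)).symm K.starProjection with hPdef
  have hP : IsStarProjection P :=
    isStarProjection_starProjection.map (toEuclideanCLM (𝕜 := ℝ) (n := κ)).symm.toStarAlgHom
  refine ⟨P, hP, ?_, ?_⟩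
  · rw [trace_toEuclideanCLM_symm_starProjection, rank_eq_finrank_span_row,
      LinearEquiv.finrank_map_eq]
  · ext i j
    have hrow : WithLp.toLp 2 (B i) ∈ K :=
      Submodule.mem_map_of_mem (Submodule.subset_span ⟨i, rfl⟩)
    have h := congrArg (fun v : EuclideanSpace ℝ κ ↦ v j) (K.starProjection_eq_self_iff.mpr hrow)
    rw [← StarAlgEquiv.apply_symm_apply toEuclideanCLM K.starProjection, ← hPdef] at h
    simp only [toEuclideanCLM_toLp, PiLp.toLp_apply] at h
    rw [← h, ← vecMul_transpose, hP.transpose_eq]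
    rfl

section Frobenius

variable {m n : ℕ}

theorem frobSq_eq_trace (M : Matrix (Fin m) (Fin n) ℝ) : frobSq M = (Mᵀ * M).trace := by
  simp only [frobSq, trace, diag_apply, mul_apply, transpose_apply, sq]
  exact sum_comm

theorem frobSq_nonneg (M : Matrix (Fin m) (Fin n) ℝ) : 0 ≤ frobSq M := by
  unfold frobSq; positivity

theorem frobSq_transpose (M : Matrix (Fin m) (Fin n) ℝ) : frobSq Mᵀ = frobSq M :=
  sum_comm

theorem frobSq_mul_of_transpose_mul_self {U : Matrix (Fin m) (Fin m) ℝ} (hU : Uᵀ * U = 1)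
    (M : Matrix (Fin m) (Fin n) ℝ) : frobSq (U * M) = frobSq M := by
  rw [frobSq_eq_trace, frobSq_eq_trace, transpose_mul, Matrix.mul_assoc, ← Matrix.mul_assoc Uᵀ,
    hU, Matrix.one_mul]

theorem frobSq_mul_of_mul_transpose_self {V : Matrix (Fin n) (Fin n) ℝ} (hV : V * Vᵀ = 1)
    (M : Matrix (Fin m) (Fin n) ℝ) : frobSq (M * V) = frobSq M := by
  rw [← frobSq_transpose, transpose_mul,
    frobSq_mul_of_transpose_mul_self (by rwa [transpose_transpose]), frobSq_transpose]

theorem frobSq_mul_of_isStarProjection {R : Matrix (Fin n) (Fin n) ℝ} (hR : IsStarProjection R)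
    (M : Matrix (Fin m) (Fin n) ℝ) : frobSq (M * R) = (Mᵀ * M * R).trace := by
  rw [frobSq_eq_trace, transpose_mul, hR.transpose_eq, Matrix.mul_assoc, trace_mul_comm,
    Matrix.mul_assoc, Matrix.mul_assoc, hR.isIdempotentElem.eq, Matrix.mul_assoc]

theorem frobSq_mul_le_of_isStarProjection {R : Matrix (Fin n) (Fin n) ℝ}
    (hR : IsStarProjection R) (M : Matrix (Fin m) (Fin n) ℝ) : frobSq (M * R) ≤ frobSq M := by
  have pythagoras : frobSq M = frobSq (M * R) + frobSq (M * (1 - R)) := by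
    rw [frobSq_mul_of_isStarProjection hR, frobSq_mul_of_isStarProjection hR.one_sub,
      ← trace_add, ← Matrix.mul_add, add_sub_cancel, Matrix.mul_one, frobSq_eq_trace]
  linarith [frobSq_nonneg (M * (1 - R))]

end Frobenius

def rectDiagonal (m : ℕ) {n : ℕ} (σ : Fin n → ℝ) : Matrix (Fin m) (Fin n) ℝ :=
  of fun i j ↦ if (i : ℕ) = j then σ j else 0

theorem rectDiagonal_transpose_mul_self {m n : ℕ} (hnm : n ≤ m) (σ : Fin n → ℝ) :
    (rectDiagonal m σ)ᵀ * rectDiagonal m σ = diagonal (σ ^ 2) := by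
  ext j j'
  have hcast (i : Fin m) (l : Fin n) : (i : ℕ) = l ↔ i = Fin.castLE hnm l := by
    simp [Fin.ext_iff]
  rcases eq_or_ne j j' with rfl | hjj'
  · simp [rectDiagonal, mul_apply, hcast, sq]
  · simp [rectDiagonal, mul_apply, hcast, hjj', hjj'.symm]

theorem sum_le_sum_mul_of_threshold {ι : Type*} [Fintype ι] (S : Finset ι)
    {c t : ι → ℝ} {θ : ℝ} (hθ : 0 ≤ θ) (hS : ∀ j ∈ S, c j ≤ θ) (hSc : ∀ j ∉ S, θ ≤ c j)
    (ht : ∀ j, t j ∈ Set.Icc 0 1) (hcard : (#S : ℝ) ≤ ∑ j, t j) :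
    ∑ j ∈ S, c j ≤ ∑ j, c j * t j := by
  classical
  have pointwise (j : ι) :
      θ * (t j - if j ∈ S then 1 else 0) ≤ c j * t j - if j ∈ S then c j else 0 := by
    obtain ⟨ht0, ht1⟩ := ht j
    split_ifs with hj
    · nlinarith [hS j hj]
    · nlinarith [hSc j hj]
  have := sum_le_sum fun j (_ : j ∈ univ) ↦ pointwise j
  simp only [← mul_sum, sum_sub_distrib, sum_ite_mem, univ_inter, sum_const, nsmul_eq_mul,
    mul_one] at this
  linarith [mul_nonneg hθ (sub_nonneg.mpr hcard)]

theorem sum_filter_le_sum_mul_of_antitone {n k : ℕ} {c t : Fin n → ℝ} (hc0 : 0 ≤ c)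
    (hc : Antitone c) (ht : ∀ j, t j ∈ Set.Icc 0 1) (hsum : (n : ℝ) - k ≤ ∑ j, t j) :
    ∑ j ∈ univ.filter (fun j : Fin n ↦ k ≤ (j : ℕ)), c j ≤ ∑ j, c j * t j := by
  rcases lt_or_ge k n with hk | hk
  · let j₀ : Fin n := ⟨k, hk⟩
    have hS : univ.filter (fun j : Fin n ↦ k ≤ (j : ℕ)) = Ici j₀ := by ext; simp [j₀, Fin.le_def]
    refine sum_le_sum_mul_of_threshold _ (hc0 j₀) (fun j hj ↦ hc ?_) (fun j hj ↦ hc ?_) ht ?_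
    · simpa [hS] using hj
    · exact Fin.le_def.mpr (le_of_lt (by simpa using hj : (j : ℕ) < k))
    · rw [hS, Fin.card_Ici, Nat.cast_sub hk.le]; exact hsum
  · have hS : univ.filter (fun j : Fin n ↦ k ≤ (j : ℕ)) = ∅ := by
      ext j
      simp only [mem_filter, mem_univ, true_and, notMem_empty, iff_false, not_le]
      omega
    refine sum_le_sum_mul_of_threshold _ le_rfl (by simp [hS]) (fun j _ ↦ hc0 j) ht ?_
    rw [hS, card_empty, Nat.cast_zero]
    exact sum_nonneg fun j _ ↦ (ht j).1

theorem eckart_young_lower_bound_general {m n : ℕ} (hmn : n ≤ m)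
    (A : Matrix (Fin m) (Fin n) ℝ)
    (U : Matrix (Fin m) (Fin m) ℝ) (V : Matrix (Fin n) (Fin n) ℝ)
    (hU : Uᵀ * U = 1) (hV : Vᵀ * V = 1) (hV' : V * Vᵀ = 1)
    (σ : Fin n → ℝ) (hσpos : ∀ j, 0 ≤ σ j) (hσdec : Antitone σ)
    (hSVD : A = U * (Matrix.of fun (i : Fin m) (j : Fin n) =>
      if (i : ℕ) = (j : ℕ) then σ j else 0) * Vᵀ)
    (k : ℕ) (B : Matrix (Fin m) (Fin n) ℝ) (hB : B.rank ≤ k) :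
    ∑ j ∈ Finset.univ.filter (fun j : Fin n => k ≤ (j : ℕ)), (σ j) ^ 2 ≤
      frobSq (A - B) := by
  obtain ⟨P, hP, htrP, hBP⟩ := exists_isStarProjection_mul_eq_self_trace_eq_rank B
  set Q := Vᵀ * (1 - P) * V
  have hQ : IsStarProjection Q := by
    simpa [star_eq_conjTranspose] using
      hP.one_sub.star_mul_mul (v := V) (by simpa [star_eq_conjTranspose] using hV')
  have htrQ : (n : ℝ) - k ≤ Q.trace := by
    rw [trace_mul_cycle, hV', Matrix.one_mul, trace_sub, trace_one, htrP, Fintype.card_fin]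
    exact sub_le_sub_left (Nat.cast_le.mpr hB) (n : ℝ)
  have hAB : (A - B) * (1 - P) = U * (rectDiagonal m σ * Q) * Vᵀ := by
    rw [Matrix.sub_mul, Matrix.mul_sub B, hBP, Matrix.mul_one, sub_self, sub_zero, hSVD]
    simp only [Q, rectDiagonal, Matrix.mul_assoc, hV', Matrix.mul_one]
  calc ∑ j ∈ univ.filter (fun j : Fin n ↦ k ≤ (j : ℕ)), σ j ^ 2
      ≤ ∑ j, σ j ^ 2 * Q j j :=
        sum_filter_le_sum_mul_of_antitone (fun j ↦ sq_nonneg (σ j))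
          (fun i j hij ↦ pow_le_pow_left₀ (hσpos j) (hσdec hij) 2) hQ.diag_mem_Icc htrQ
    _ = frobSq (rectDiagonal m σ * Q) := by
        rw [frobSq_mul_of_isStarProjection hQ, rectDiagonal_transpose_mul_self hmn]
        simp [trace, diagonal_mul]
    _ = frobSq ((A - B) * (1 - P)) := by
        rw [hAB, frobSq_mul_of_mul_transpose_self (V := Vᵀ) (by rwa [transpose_transpose]),
          frobSq_mul_of_transpose_mul_self hU]
    _ ≤ frobSq (A - B) := frobSq_mul_le_of_isStarProjection hP.one_sub _

/-- Eckart–Young (lower bound): any rank-`≤ k` matrix `B` satisfies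
`‖A - B‖_F² ≥ ∑_{j > k} σⱼ(A)²`, where the `σⱼ` come from an SVD of `A`. -/
theorem eckart_young_lower_bound {m n : ℕ} (hmn : n ≤ m)
    (A : Matrix (Fin m) (Fin n) ℝ)
    (U : Matrix (Fin m) (Fin m) ℝ) (V : Matrix (Fin n) (Fin n) ℝ)
    (hU : Uᵀ * U = 1) (hU' : U * Uᵀ = 1) (hV : Vᵀ * V = 1) (hV' : V * Vᵀ = 1)
    (σ : Fin n → ℝ) (hσpos : ∀ j, 0 ≤ σ j) (hσdec : Antitone σ)
    (hSVD : A = U * (Matrix.of fun (i : Fin m) (j : Fin n) =>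
      if (i : ℕ) = (j : ℕ) then σ j else 0) * Vᵀ)
    (k : ℕ) (B : Matrix (Fin m) (Fin n) ℝ) (hB : B.rank ≤ k) :
    ∑ j ∈ Finset.univ.filter (fun j : Fin n => k ≤ (j : ℕ)), (σ j) ^ 2 ≤
      frobSq (A - B) :=
  eckart_young_lower_bound_general hmn A U V hU hV hV' σ hσpos hσdec hSVD k B hB
end

section
/- Eckart–Young–Mirsky for Hilbert–Schmidt operators (lower bound): if F : H₁ → H₂ is a Hilbert–Schmidt operator with singular values σ₁ ≥ σ₂ ≥ … and R : H₁ → H₂ is any bounded operator of rank at most k, then ‖F - R‖_HS² ≥ ∑_{j=k+1}^{∞} σⱼ². -/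
/-!
Inside the span of the first `n + k + 1` right singular vectors, the kernel of `R` has codimension
at most `k`, so it contains a unit vector orthogonal to any `n` given vectors. This yields an
orthonormal sequence `xₙ ∈ ker R` with `xₙ` in the span of `q₁ 0, …, q₁ (n + k)`, whence
`‖(F - R) xₙ‖ = ‖F xₙ‖ ≥ σ_{n+k}`. It remains to see that `∑ₙ ‖A xₙ‖² ≤ ∑ᵢ ‖A eᵢ‖²` for any
orthonormal sequence `x`: with a Hilbert basis `f` of `H₂`, Parseval gives
`∑ᵢ ‖A eᵢ‖² = ∑ₘ ‖A† fₘ‖²` and `∑ₙ ‖A xₙ‖² = ∑ₘ ∑ₙ |⟪xₙ, A† fₘ⟫|²`, and Bessel compares the two.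
-/

open scoped ENNReal InnerProductSpace

open Module

section Hilbert

variable {𝕜 E F : Type*} [RCLike 𝕜]
  [NormedAddCommGroup E] [InnerProductSpace 𝕜 E] [NormedAddCommGroup F] [InnerProductSpace 𝕜 F]

lemma enorm_sq_eq_ofReal_norm_sq (x : E) : ‖x‖ₑ ^ 2 = ENNReal.ofReal (‖x‖ ^ 2) := by
  rw [← ofReal_norm, ENNReal.ofReal_pow (norm_nonneg _)]

lemma HilbertBasis.enorm_sq_eq_tsum {ι : Type*} (b : HilbertBasis ι 𝕜 E) (x : E) :
    ‖x‖ₑ ^ 2 = ∑' i, ‖⟪b i, x⟫_𝕜‖ₑ ^ 2 := by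
  have h := lp.hasSum_norm (p := 2) (by norm_num) (b.repr x)
  simp only [ENNReal.toReal_ofNat, Real.rpow_two, b.repr_apply_apply,
    LinearIsometryEquiv.norm_map] at h
  simp only [enorm_sq_eq_ofReal_norm_sq]
  rw [← h.tsum_eq, ENNReal.ofReal_tsum_of_nonneg (fun _ => by positivity) h.summable]

lemma Orthonormal.tsum_enorm_inner_sq_le {ι : Type*} {v : ι → E} (hv : Orthonormal 𝕜 v) (x : E) :
    ∑' i, ‖⟪v i, x⟫_𝕜‖ₑ ^ 2 ≤ ‖x‖ₑ ^ 2 := by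
  simp only [enorm_sq_eq_ofReal_norm_sq]
  rw [← ENNReal.ofReal_tsum_of_nonneg (fun _ => by positivity) (hv.inner_products_summable x)]
  exact ENNReal.ofReal_le_ofReal (hv.tsum_inner_products_le x)

lemma Orthonormal.inner_eq_of_hasSum {ι : Type*} {v : ι → E} (hv : Orthonormal 𝕜 v)
    {c : ι → 𝕜} {x : E} (hx : HasSum (fun j => c j • v j) x) (i : ι) : ⟪v i, x⟫_𝕜 = c i := by
  classical
  have h := hx.mapL (innerSL 𝕜 (v i))
  simp only [innerSL_apply_apply, inner_smul_right, orthonormal_iff_ite.mp hv, mul_ite, mul_one,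
    mul_zero] at h
  exact h.unique (hasSum_single i fun j hj => if_neg (Ne.symm hj)) |>.trans (if_pos rfl)

lemma Orthonormal.sum_norm_inner_sq_eq_of_mem_span {ι : Type*} [Fintype ι] {v : ι → E}
    (hv : Orthonormal 𝕜 v) {x : E} (hx : x ∈ Submodule.span 𝕜 (Set.range v)) :
    ∑ i, ‖⟪v i, x⟫_𝕜‖ ^ 2 = ‖x‖ ^ 2 := by
  obtain ⟨c, rfl⟩ := (Submodule.mem_span_range_iff_exists_fun 𝕜).mp hx
  have h := hv.inner_sum c c Finset.univ
  simp only [RCLike.conj_mul, inner_self_eq_norm_sq_to_K] at h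
  simp only [hv.inner_right_fintype]
  exact_mod_cast h.symm

lemma exists_norm_eq_one_mem_inf_ker_forall_inner_eq_zero {M : Type*} [AddCommGroup M]
    [Module 𝕜 M] (T : E →ₗ[𝕜] M) {k n : ℕ} (hT : Module.rank 𝕜 (LinearMap.range T) ≤ k)
    (V : Submodule 𝕜 E) [FiniteDimensional 𝕜 V] (hV : n + k < finrank 𝕜 V) (w : Fin n → E) :
    ∃ v ∈ V ⊓ LinearMap.ker T, ‖v‖ = 1 ∧ ∀ i, ⟪w i, v⟫_𝕜 = 0 := by
  have : FiniteDimensional 𝕜 (LinearMap.range T) :=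
    Module.rank_lt_aleph0_iff.mp (hT.trans_lt Cardinal.natCast_lt_aleph0)
  let φ : V →ₗ[𝕜] LinearMap.range T × (Fin n → 𝕜) :=
    (T.rangeRestrict ∘ₗ V.subtype).prod (LinearMap.pi fun i => innerₛₗ 𝕜 (w i) ∘ₗ V.subtype)
  have hφ : LinearMap.ker φ ≠ ⊥ := LinearMap.ker_ne_bot_of_finrank_lt <| by
    rw [finrank_prod, finrank_fin_fun]
    have := finrank_le_of_rank_le hT
    omega
  obtain ⟨u, hu, hu0⟩ := (Submodule.ne_bot_iff _).mp hφ
  obtain ⟨hTu, hwu⟩ := Prod.ext_iff.mp (LinearMap.mem_ker.mp hu)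
  have hTu : T u = 0 := congrArg Subtype.val hTu
  refine ⟨(‖(u : E)‖⁻¹ : 𝕜) • (u : E), ⟨V.smul_mem _ u.2, ?_⟩,
    norm_smul_inv_norm (by simpa using hu0), fun i => ?_⟩
  · simp [hTu]
  · have hwu : ⟪w i, (u : E)⟫_𝕜 = 0 := congrFun hwu i
    rw [inner_smul_right, hwu, mul_zero]

lemma exists_orthonormal_forall_mem {S : ℕ → Set E}
    (hS : ∀ n (w : Fin n → E), ∃ v ∈ S n, ‖v‖ = 1 ∧ ∀ i, ⟪w i, v⟫_𝕜 = 0) :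
    ∃ x : ℕ → E, Orthonormal 𝕜 x ∧ ∀ n, x n ∈ S n := by
  choose next hnextS hnext1 hnextw using hS
  let tup : (n : ℕ) → Fin n → E := fun n =>
    Nat.rec (motive := fun n => Fin n → E) Fin.elim0 (fun n w => Fin.snoc w (next n w)) n
  let x : ℕ → E := fun n => next n (tup n)
  have htup : ∀ n (i : Fin n), tup n i = x i := by
    intro n
    induction n with
    | zero => exact fun i => i.elim0
    | succ n ih =>
      refine Fin.lastCases ?_ fun j => ?_
      · exact Fin.snoc_last (α := fun _ => E) _ _
      · exact (Fin.snoc_castSucc (α := fun _ => E) _ _ _).trans (ih j)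
  have horth : ∀ i j, i < j → ⟪x i, x j⟫_𝕜 = 0 := fun i j hij => by
    simpa only [htup] using hnextw j (tup j) ⟨i, hij⟩
  refine ⟨x, orthonormal_iff_ite.mpr fun i j => ?_, fun n => hnextS n _⟩
  rcases lt_trichotomy i j with h | rfl | h
  · rw [if_neg h.ne, horth i j h]
  · rw [if_pos rfl, inner_self_eq_norm_sq_to_K, hnext1, RCLike.ofReal_one, one_pow]
  · rw [if_neg h.ne', ← inner_conj_symm, horth j i h, map_zero]

variable [CompleteSpace E] [CompleteSpace F]

lemma tsum_enorm_sq_apply_le_of_orthonormal (A : E →L[𝕜] F) {x : ℕ → E} (hx : Orthonormal 𝕜 x)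
    {ι : Type*} (b : HilbertBasis ι 𝕜 E) :
    ∑' n, ‖A (x n)‖ₑ ^ 2 ≤ ∑' i, ‖A (b i)‖ₑ ^ 2 := by
  obtain ⟨w, f, -⟩ := exists_hilbertBasis 𝕜 F
  have hparseval : ∀ y, ‖A y‖ₑ ^ 2 = ∑' m, ‖⟪y, A.adjoint (f m)⟫_𝕜‖ₑ ^ 2 := fun y => by
    rw [f.enorm_sq_eq_tsum]
    refine tsum_congr fun m => ?_
    rw [← A.adjoint_inner_left, ← inner_conj_symm, RCLike.enorm_conj]
  calc ∑' n, ‖A (x n)‖ₑ ^ 2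
      = ∑' m, ∑' n, ‖⟪x n, A.adjoint (f m)⟫_𝕜‖ₑ ^ 2 := by
        simp only [hparseval]
        exact ENNReal.tsum_comm
    _ ≤ ∑' m, ‖A.adjoint (f m)‖ₑ ^ 2 := ENNReal.tsum_le_tsum fun m =>
        hx.tsum_enorm_inner_sq_le _
    _ = ∑' i, ‖A (b i)‖ₑ ^ 2 := by
        simp only [hparseval, b.enorm_sq_eq_tsum (A.adjoint _)]
        exact ENNReal.tsum_comm

end Hilbert

open scoped RealInnerProductSpace

lemma sq_mul_norm_sq_le_norm_sq_of_hasSum {H₁ H₂ : Type*}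
    [NormedAddCommGroup H₁] [InnerProductSpace ℝ H₁]
    [NormedAddCommGroup H₂] [InnerProductSpace ℝ H₂]
    {σ : ℕ → ℝ} (hσpos : ∀ j, 0 ≤ σ j) (hσdec : Antitone σ) {q₁ : ℕ → H₁} {q₂ : ℕ → H₂}
    (hq₁ : Orthonormal ℝ q₁) (hq₂ : Orthonormal ℝ q₂) {m : ℕ} {x : H₁} {y : H₂}
    (hy : HasSum (fun j => (σ j * ⟪q₁ j, x⟫) • q₂ j) y)
    (hx : x ∈ Submodule.span ℝ (Set.range fun j : Fin (m + 1) => q₁ j)) :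
    σ m ^ 2 * ‖x‖ ^ 2 ≤ ‖y‖ ^ 2 := by
  have hq₁m : Orthonormal ℝ fun j : Fin (m + 1) => q₁ j := hq₁.comp _ Fin.val_injective
  calc σ m ^ 2 * ‖x‖ ^ 2 = ∑ j : Fin (m + 1), σ m ^ 2 * ⟪q₁ j, x⟫ ^ 2 := by
        simp only [← hq₁m.sum_norm_inner_sq_eq_of_mem_span hx, Finset.mul_sum, Real.norm_eq_abs,
          sq_abs]
    _ ≤ ∑ j : Fin (m + 1), (σ j * ⟪q₁ j, x⟫) ^ 2 := Finset.sum_le_sum fun j _ => by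
        rw [mul_pow]
        gcongr
        exacts [hσpos m, hσdec (Fin.is_le j)]
    _ = ∑ j : Fin (m + 1), ‖⟪q₂ j, y⟫‖ ^ 2 := by
        simp only [hq₂.inner_eq_of_hasSum hy, Real.norm_eq_abs, sq_abs]
    _ ≤ ‖y‖ ^ 2 := (hq₂.comp _ Fin.val_injective).sum_inner_products_le y

theorem eckart_young_mirsky_hilbert_schmidt_general
    {H₁ H₂ : Type*}
    [NormedAddCommGroup H₁] [InnerProductSpace ℝ H₁] [CompleteSpace H₁]
    [NormedAddCommGroup H₂] [InnerProductSpace ℝ H₂] [CompleteSpace H₂]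
    (F : H₁ →L[ℝ] H₂)
    (σ : ℕ → ℝ) (hσpos : ∀ j, 0 ≤ σ j) (hσdec : Antitone σ)
    (q₁ : ℕ → H₁) (q₂ : ℕ → H₂) (hq₁ : Orthonormal ℝ q₁) (hq₂ : Orthonormal ℝ q₂)
    (hSVD : ∀ f : H₁, HasSum (fun j => (σ j * ⟪q₁ j, f⟫) • q₂ j) (F f))
    (k : ℕ) (R : H₁ →L[ℝ] H₂)
    (hR : Module.rank ℝ (LinearMap.range (R : H₁ →ₗ[ℝ] H₂)) ≤ (k : Cardinal))
    {ι : Type*} (e : HilbertBasis ι ℝ H₁) :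
    ∑' j : ℕ, ENNReal.ofReal (σ (j + k) ^ 2) ≤
      ∑' i : ι, (‖F (e i) - R (e i)‖₊ : ℝ≥0∞) ^ 2 := by
  let V (n : ℕ) := Submodule.span ℝ (Set.range fun j : Fin (n + k + 1) => q₁ j)
  have (n : ℕ) : FiniteDimensional ℝ (V n) :=
    FiniteDimensional.span_of_finite ℝ (Set.finite_range _)
  have hV (n : ℕ) : finrank ℝ (V n) = n + k + 1 :=
    (finrank_span_eq_card (hq₁.comp _ Fin.val_injective).linearIndependent).trans
      (Fintype.card_fin _)
  obtain ⟨x, hx, hxV⟩ := exists_orthonormal_forall_mem (𝕜 := ℝ)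
    (S := fun n => ↑(V n ⊓ LinearMap.ker (R : H₁ →ₗ[ℝ] H₂))) fun n w =>
      exists_norm_eq_one_mem_inf_ker_forall_inner_eq_zero _ hR (V n) (by rw [hV]; omega) w
  calc ∑' j, ENNReal.ofReal (σ (j + k) ^ 2)
      ≤ ∑' j, ‖(F - R) (x j)‖ₑ ^ 2 := ENNReal.tsum_le_tsum fun j => by
        obtain ⟨hxj, hRxj⟩ := Submodule.mem_inf.mp (hxV j)
        have hRxj : R (x j) = 0 := hRxj
        have hσ := sq_mul_norm_sq_le_norm_sq_of_hasSum hσpos hσdec hq₁ hq₂ (hSVD (x j)) hxj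
        rw [hx.norm_eq_one, one_pow, mul_one] at hσ
        rw [sub_apply, hRxj, sub_zero, enorm_sq_eq_ofReal_norm_sq]
        exact ENNReal.ofReal_le_ofReal hσ
    _ ≤ ∑' i, ‖(F - R) (e i)‖ₑ ^ 2 := tsum_enorm_sq_apply_le_of_orthonormal _ hx e
    _ = ∑' i, (‖F (e i) - R (e i)‖₊ : ℝ≥0∞) ^ 2 := by
        simp only [sub_apply, enorm_eq_nnnorm]

/-- Eckart–Young–Mirsky lower bound for Hilbert–Schmidt operators: if `F` has
singular value decomposition `F f = ∑ⱼ σⱼ ⟨q₁ⱼ, f⟩ q₂ⱼ` and `R` is a bounded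
operator of rank at most `k`, then `‖F - R‖_HS² ≥ ∑_{j>k} σⱼ²`. -/
theorem eckart_young_mirsky_hilbert_schmidt
    {H₁ H₂ : Type*}
    [NormedAddCommGroup H₁] [InnerProductSpace ℝ H₁] [CompleteSpace H₁]
    [NormedAddCommGroup H₂] [InnerProductSpace ℝ H₂] [CompleteSpace H₂]
    [TopologicalSpace.SeparableSpace H₁] [TopologicalSpace.SeparableSpace H₂]
    (F : H₁ →L[ℝ] H₂)
    (σ : ℕ → ℝ) (hσpos : ∀ j, 0 ≤ σ j) (hσdec : Antitone σ)
    (hσsum : Summable fun j => σ j ^ 2)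
    (q₁ : ℕ → H₁) (q₂ : ℕ → H₂) (hq₁ : Orthonormal ℝ q₁) (hq₂ : Orthonormal ℝ q₂)
    (hSVD : ∀ f : H₁, HasSum (fun j => (σ j * ⟪q₁ j, f⟫) • q₂ j) (F f))
    (k : ℕ) (R : H₁ →L[ℝ] H₂)
    (hR : Module.rank ℝ (LinearMap.range (R : H₁ →ₗ[ℝ] H₂)) ≤ (k : Cardinal))
    {ι : Type*} [Countable ι] (e : HilbertBasis ι ℝ H₁) :
    ∑' j : ℕ, ENNReal.ofReal (σ (j + k) ^ 2) ≤
      ∑' i : ι, (‖F (e i) - R (e i)‖₊ : ℝ≥0∞) ^ 2 :=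
  eckart_young_mirsky_hilbert_schmidt_general F σ hσpos hσdec q₁ q₂ hq₁ hq₂ hSVD k R hR e
end
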